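/- (Tensor product rule) For j = 1, 2 let H_j be a (q_j, η_j, ε_j)-embedding of A_j with unitary transformation U_j and embedding subspace S_j. Then H = H_1 ⊗ H_2 is a (q_1 + q_2, η_1 + η_2, ‖A_1‖ ε_2 + ‖A_2‖ ε_1 + ε_1 ε_2)-embedding of A = A_1 ⊗ A_2, with unitary transformation U = U_1 ⊗ U_2 and embedding subspace S = S_1 ⊗ S_2 (whose orthogonal projection is P_{S_1} ⊗ P_{S_2}). -/

import Mathlib

open Matrix
open scoped Matrix.Norms.L2Operator Kronecker

/-- `H` is an `(η, ε)`-embedding of `A` with embedding subspace given by the orthogonal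
projection `PS`, witnessed by the unitary `U`. -/
def IsHamiltonianEmbedding {n : Type*} [Fintype n] [DecidableEq n]
    (PS U H A : Matrix n n ℂ) (η ε : ℝ) : Prop :=
  U ∈ Matrix.unitaryGroup n ℂ ∧
  PS * (Uᴴ * H * U) * (1 - PS) = 0 ∧
  ‖(1 : Matrix n n ℂ) - U‖ ≤ η ∧
  ‖PS * (Uᴴ * H * U) * PS - A‖ ≤ ε

/-!
Conjugating `H₁ ⊗ H₂` by `U₁ ⊗ U₂` gives the tensor product of the conjugated Hamiltonians, and
compressing it by `P₁ ⊗ P₂` gives the tensor product of the compressions, so all three conditions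
factor. The norm estimates come from `‖A ⊗ B‖ ≤ ‖A‖ ‖B‖`, which holds because `A ↦ A ⊗ 1` and
`B ↦ 1 ⊗ B` are star algebra homomorphisms between C⋆-algebras, hence contractive, applied to
`1 - U₁ ⊗ U₂ = (1 - U₁) ⊗ U₂ + 1 ⊗ (1 - U₂)` and to
`B₁ ⊗ B₂ - A₁ ⊗ A₂ = A₁ ⊗ (B₂ - A₂) + (B₁ - A₁) ⊗ A₂ + (B₁ - A₁) ⊗ (B₂ - A₂)`.
-/

namespace Matrix

section Ring

variable {α l m n p : Type*}

lemma sub_kronecker [NonUnitalNonAssocRing α] (A₁ A₂ : Matrix l m α) (B : Matrix n p α) :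
    (A₁ - A₂) ⊗ₖ B = A₁ ⊗ₖ B - A₂ ⊗ₖ B := by
  ext
  simp [sub_mul]

lemma kronecker_sub [NonUnitalNonAssocRing α] (A : Matrix l m α) (B₁ B₂ : Matrix n p α) :
    A ⊗ₖ (B₁ - B₂) = A ⊗ₖ B₁ - A ⊗ₖ B₂ := by
  ext
  simp [mul_sub]

lemma kronecker_sub_kronecker [NonUnitalNonAssocRing α] (A₁ B₁ : Matrix l m α)
    (A₂ B₂ : Matrix n p α) :
    B₁ ⊗ₖ B₂ - A₁ ⊗ₖ A₂
      = A₁ ⊗ₖ (B₂ - A₂) + (B₁ - A₁) ⊗ₖ A₂ + (B₁ - A₁) ⊗ₖ (B₂ - A₂) := by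
  simp only [sub_kronecker, kronecker_sub]
  abel

lemma one_sub_kronecker [Ring α] [DecidableEq m] [DecidableEq n] (U₁ : Matrix m m α)
    (U₂ : Matrix n n α) : 1 - U₁ ⊗ₖ U₂ = (1 - U₁) ⊗ₖ U₂ + 1 ⊗ₖ (1 - U₂) := by
  rw [sub_kronecker, kronecker_sub, one_kronecker_one]
  abel

lemma kronecker_mul_mul_one_sub_eq_zero [CommRing α] [Fintype m] [DecidableEq m] [Fintype n]
    [DecidableEq n] {P₁ M₁ : Matrix m m α} {P₂ M₂ : Matrix n n α}
    (h₁ : P₁ * M₁ * (1 - P₁) = 0) (h₂ : P₂ * M₂ * (1 - P₂) = 0) :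
    (P₁ ⊗ₖ P₂) * (M₁ ⊗ₖ M₂) * (1 - P₁ ⊗ₖ P₂) = 0 := by
  rw [mul_sub, mul_one, sub_eq_zero] at h₁ h₂ ⊢
  rw [← mul_kronecker_mul, ← mul_kronecker_mul, ← h₁, ← h₂]

end Ring

variable {R m n : Type*} [Fintype m] [DecidableEq m] [Fintype n] [DecidableEq n]

section StarAlgHom

variable [CommSemiring R] [StarRing R]

variable (R m n) in
def kroneckerIncludeLeft : Matrix m m R →⋆ₐ[R] Matrix (m × n) (m × n) R where
  toFun A := A ⊗ₖ 1
  map_one' := one_kronecker_one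
  map_mul' A B := by rw [← mul_kronecker_mul, one_mul]
  map_zero' := zero_kronecker _
  map_add' A B := add_kronecker A B 1
  commutes' r := by simp [Algebra.algebraMap_eq_smul_one, smul_kronecker]
  map_star' A := by simp [star_eq_conjTranspose, conjTranspose_kronecker]

variable (R m n) in
def kroneckerIncludeRight : Matrix n n R →⋆ₐ[R] Matrix (m × n) (m × n) R where
  toFun B := 1 ⊗ₖ B
  map_one' := one_kronecker_one
  map_mul' A B := by rw [← mul_kronecker_mul, one_mul]
  map_zero' := kronecker_zero _
  map_add' A B := kronecker_add 1 A B
  commutes' r := by simp [Algebra.algebraMap_eq_smul_one, kronecker_smul]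
  map_star' A := by simp [star_eq_conjTranspose, conjTranspose_kronecker]

end StarAlgHom

lemma l2_opNorm_kronecker_le (A : Matrix m m ℂ) (B : Matrix n n ℂ) :
    ‖A ⊗ₖ B‖ ≤ ‖A‖ * ‖B‖ :=
  calc ‖A ⊗ₖ B‖ = ‖kroneckerIncludeLeft ℂ m n A * kroneckerIncludeRight ℂ m n B‖ := by
        simp [kroneckerIncludeLeft, kroneckerIncludeRight, ← mul_kronecker_mul]
    _ ≤ ‖A‖ * ‖B‖ := (l2_opNorm_mul _ _).trans <| mul_le_mul
        (NonUnitalStarAlgHom.norm_apply_le _ A) (NonUnitalStarAlgHom.norm_apply_le _ B)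
        (norm_nonneg _) (norm_nonneg _)

lemma l2_opNorm_kronecker_mem_unitary_le (A : Matrix m m ℂ) {U : Matrix n n ℂ}
    (hU : U ∈ unitary (Matrix n n ℂ)) : ‖A ⊗ₖ U‖ ≤ ‖A‖ :=
  calc ‖A ⊗ₖ U‖ = ‖kroneckerIncludeLeft ℂ m n A * (1 ⊗ₖ U)‖ := by
        simp [kroneckerIncludeLeft, ← mul_kronecker_mul]
    _ = ‖kroneckerIncludeLeft ℂ m n A‖ :=
        CStarRing.norm_mul_mem_unitary _ (kronecker_mem_unitary (one_mem _) hU)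
    _ ≤ ‖A‖ := NonUnitalStarAlgHom.norm_apply_le _ A

lemma l2_opNorm_one_sub_kronecker_le (U₁ : Matrix m m ℂ) {U₂ : Matrix n n ℂ}
    (hU₂ : U₂ ∈ unitary (Matrix n n ℂ)) : ‖1 - U₁ ⊗ₖ U₂‖ ≤ ‖1 - U₁‖ + ‖1 - U₂‖ := by
  rw [one_sub_kronecker]
  exact (norm_add_le _ _).trans <| add_le_add (l2_opNorm_kronecker_mem_unitary_le _ hU₂)
    (NonUnitalStarAlgHom.norm_apply_le (kroneckerIncludeRight ℂ m n) _)

lemma l2_opNorm_kronecker_sub_kronecker_le (A₁ B₁ : Matrix m m ℂ) (A₂ B₂ : Matrix n n ℂ) :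
    ‖B₁ ⊗ₖ B₂ - A₁ ⊗ₖ A₂‖
      ≤ ‖A₁‖ * ‖B₂ - A₂‖ + ‖A₂‖ * ‖B₁ - A₁‖ + ‖B₁ - A₁‖ * ‖B₂ - A₂‖ := by
  rw [kronecker_sub_kronecker, mul_comm ‖A₂‖]
  refine norm_add₃_le.trans ?_
  gcongr <;> exact l2_opNorm_kronecker_le _ _

end Matrix

theorem embedding_tensor_rule_general (q₁ q₂ : ℕ) (η₁ η₂ ε₁ ε₂ : ℝ)
    (PS₁ U₁ H₁ A₁ : Matrix (Fin (2 ^ q₁)) (Fin (2 ^ q₁)) ℂ)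
    (PS₂ U₂ H₂ A₂ : Matrix (Fin (2 ^ q₂)) (Fin (2 ^ q₂)) ℂ)
    (h₁ : IsHamiltonianEmbedding PS₁ U₁ H₁ A₁ η₁ ε₁)
    (h₂ : IsHamiltonianEmbedding PS₂ U₂ H₂ A₂ η₂ ε₂) :
    IsHamiltonianEmbedding (PS₁ ⊗ₖ PS₂) (U₁ ⊗ₖ U₂) (H₁ ⊗ₖ H₂) (A₁ ⊗ₖ A₂)
      (η₁ + η₂) (‖A₁‖ * ε₂ + ‖A₂‖ * ε₁ + ε₁ * ε₂) := by
  obtain ⟨hU₁, hP₁, hη₁, hε₁⟩ := h₁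
  obtain ⟨hU₂, hP₂, hη₂, hε₂⟩ := h₂
  have hconj : (U₁ ⊗ₖ U₂)ᴴ * (H₁ ⊗ₖ H₂) * (U₁ ⊗ₖ U₂)
      = (U₁ᴴ * H₁ * U₁) ⊗ₖ (U₂ᴴ * H₂ * U₂) := by
    rw [conjTranspose_kronecker, ← mul_kronecker_mul, ← mul_kronecker_mul]
  refine ⟨kronecker_mem_unitary hU₁ hU₂, ?_, ?_, ?_⟩
  · rw [hconj]
    exact kronecker_mul_mul_one_sub_eq_zero hP₁ hP₂
  · exact (l2_opNorm_one_sub_kronecker_le U₁ hU₂).trans (add_le_add hη₁ hη₂)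
  · rw [hconj, ← mul_kronecker_mul, ← mul_kronecker_mul]
    have hε₁_nonneg : 0 ≤ ε₁ := (norm_nonneg _).trans hε₁
    refine (l2_opNorm_kronecker_sub_kronecker_le _ _ _ _).trans ?_
    gcongr

/-- **Tensor product rule for Hamiltonian embeddings.** If `Hⱼ` is a `(qⱼ, ηⱼ, εⱼ)`-embedding of
`Aⱼ` with unitary `Uⱼ` and subspace projection `Pⱼ` (j = 1,2), then `H₁ ⊗ H₂` is a
`(q₁ + q₂, η₁ + η₂, ‖A₁‖ε₂ + ‖A₂‖ε₁ + ε₁ε₂)`-embedding of `A₁ ⊗ A₂` with unitary `U₁ ⊗ U₂` and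
subspace projection `P₁ ⊗ P₂`. -/
theorem embedding_tensor_rule (q₁ q₂ : ℕ) (η₁ η₂ ε₁ ε₂ : ℝ)
    (hη₁ : 0 < η₁) (hη₂ : 0 < η₂) (hε₁ : 0 < ε₁) (hε₂ : 0 < ε₂)
    (PS₁ U₁ H₁ A₁ : Matrix (Fin (2 ^ q₁)) (Fin (2 ^ q₁)) ℂ)
    (PS₂ U₂ H₂ A₂ : Matrix (Fin (2 ^ q₂)) (Fin (2 ^ q₂)) ℂ)
    (hPS₁herm : PS₁.IsHermitian) (hPS₁proj : PS₁ * PS₁ = PS₁)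
    (hPS₂herm : PS₂.IsHermitian) (hPS₂proj : PS₂ * PS₂ = PS₂)
    (hH₁ : H₁.IsHermitian) (hH₂ : H₂.IsHermitian)
    (hA₁ : A₁.IsHermitian) (hA₂ : A₂.IsHermitian)
    (hA₁S : A₁ = PS₁ * A₁ * PS₁) (hA₂S : A₂ = PS₂ * A₂ * PS₂)
    (h₁ : IsHamiltonianEmbedding PS₁ U₁ H₁ A₁ η₁ ε₁)
    (h₂ : IsHamiltonianEmbedding PS₂ U₂ H₂ A₂ η₂ ε₂) :
    IsHamiltonianEmbedding (PS₁ ⊗ₖ PS₂) (U₁ ⊗ₖ U₂) (H₁ ⊗ₖ H₂) (A₁ ⊗ₖ A₂)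
      (η₁ + η₂) (‖A₁‖ * ε₂ + ‖A₂‖ * ε₁ + ε₁ * ε₂) :=
  embedding_tensor_rule_general q₁ q₂ η₁ η₂ ε₁ ε₂ PS₁ U₁ H₁ A₁ PS₂ U₂ H₂ A₂ h₁ h₂
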